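/- arXiv:math/0403095 — 2 statements merged into one kernel-verified Lean document; each statement's English description precedes it below -/
import Mathlib

section
/- If w ∈ ι(θ) is a twisted identity satisfying s·w·θ(s) = w for all s in the support J(w) of w (equivalently, w equals the longest element of the finite parabolic subgroup W_{J(w)}), then w = e. -/
/-- The set of twisted identities `ι(θ) = {x·θ(x⁻¹) : x ∈ W}`. -/
def twistedIdentities {W : Type*} [Group W] (θ : W ≃* W) : Set W :=
  {w : W | ∃ x : W, w = x * θ x⁻¹}

/-!
Tits' permutation representation of `W` on `W × ZMod 2`, in which `s ∈ S` acts by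
`(t, ε) ↦ (s t s, ε + [t = s])`, defines a cocycle `φ(u, t) ∈ ZMod 2`,
`φ(u v, t) = φ(v, t) + φ(u, v t v⁻¹)`, which equals `1` at `t = s` whenever `s` is a right
descent of `u`, and is invariant under diagram automorphisms. If `w = x θ(x⁻¹)` and
`s w θ(s) = w`, then `θ(s) = w⁻¹ s w`, so the reflection `r = x⁻¹ s x` is `θ`-fixed and
`φ(w⁻¹, s) = φ(x, r) + φ(θ x, θ r) = 2 φ(x, r) = 0`: such an `s` is never a left descent of `w`.
But if `w ≠ 1` the first letter of a reduced word for `w` is a left descent.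
-/

open Equiv
open scoped Classical

section ReflectionPerm

variable {G : Type*} [Group G]

theorem mul_mul_inv_eq_iff_eq_inv_mul_mul (a t u : G) : a * t * a⁻¹ = u ↔ t = a⁻¹ * u * a := by
  constructor <;> rintro rfl <;> group

noncomputable def reflectionPermFun (a : G) (p : G × ZMod 2) : G × ZMod 2 :=
  (a * p.1 * a⁻¹, p.2 + if p.1 = a then 1 else 0)

theorem reflectionPermFun_involutive {a : G} (ha : a⁻¹ = a) :
    Function.Involutive (reflectionPermFun a) := by
  rintro ⟨t, ε⟩
  have hconj : a * t * a⁻¹ = a ↔ t = a := by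
    rw [mul_mul_inv_eq_iff_eq_inv_mul_mul, inv_mul_cancel, one_mul]
  simp only [reflectionPermFun, Prod.mk.injEq, hconj, add_assoc, CharTwo.add_self_eq_zero,
    add_zero, and_true]
  rw [mul_mul_inv_eq_iff_eq_inv_mul_mul, ha]

noncomputable def reflectionPerm (a : G) (ha : a⁻¹ = a) : Perm (G × ZMod 2) :=
  (reflectionPermFun_involutive ha).toPerm

theorem reflectionPerm_apply {a : G} (ha : a⁻¹ = a) (t : G) (ε : ZMod 2) :
    reflectionPerm a ha (t, ε) = (a * t * a⁻¹, ε + if t = a then 1 else 0) :=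
  rfl

theorem reflectionPerm_mul_pow_apply {a b : G} (ha : a⁻¹ = a) (hb : b⁻¹ = b) (k : ℕ) (t : G)
    (ε : ZMod 2) :
    ((reflectionPerm a ha * reflectionPerm b hb) ^ k) (t, ε) =
      ((a * b) ^ k * t * ((a * b) ^ k)⁻¹,
        ε + ∑ n ∈ Finset.range (2 * k), if t = (b * a) ^ n * b then 1 else 0) := by
  induction k generalizing t ε with
  | zero => simp
  | succ k ih =>
    have hb_conj : b * t * b⁻¹ = a ↔ t = (b * a) ^ 1 * b := by
      rw [mul_mul_inv_eq_iff_eq_inv_mul_mul, hb, pow_one]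
    have hab_conj (n : ℕ) :
        a * (b * t * b⁻¹) * a⁻¹ = (b * a) ^ n * b ↔ t = (b * a) ^ (n + 2) * b := by
      rw [mul_mul_inv_eq_iff_eq_inv_mul_mul, mul_mul_inv_eq_iff_eq_inv_mul_mul, ha, hb,
        pow_succ, pow_succ']
      simp only [mul_assoc]
    rw [pow_succ, Perm.mul_apply, Perm.mul_apply, reflectionPerm_apply, reflectionPerm_apply, ih,
      Prod.mk.injEq]
    refine ⟨by simp only [pow_succ, mul_inv_rev, mul_assoc], ?_⟩
    simp only [hb_conj, hab_conj, Nat.mul_succ, Finset.sum_range_succ' _ (2 * k + 1),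
      Finset.sum_range_succ' _ (2 * k), pow_zero, one_mul]
    abel

theorem reflectionPerm_mul_pow_eq_one {a b : G} (ha : a⁻¹ = a) (hb : b⁻¹ = b) {m : ℕ}
    (h : (a * b) ^ m = 1) : (reflectionPerm a ha * reflectionPerm b hb) ^ m = 1 := by
  have hba : (b * a) ^ m = 1 := by rw [← ha, ← hb, ← mul_inv_rev, inv_pow, h, inv_one]
  ext ⟨t, ε⟩ <;> simp only [reflectionPerm_mul_pow_apply, h, Perm.one_apply]
  · simp
  · rw [two_mul, Finset.sum_range_add]
    simp only [pow_add, hba, one_mul, CharTwo.add_self_eq_zero, add_zero]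

end ReflectionPerm

namespace CoxeterSystem

variable {B W : Type*} [Group W] {M : CoxeterMatrix B} (cs : CoxeterSystem M W)

noncomputable def reflectionRep : W →* Perm (W × ZMod 2) :=
  cs.lift ⟨fun i => reflectionPerm (cs.simple i) (cs.inv_simple i),
    fun i j => reflectionPerm_mul_pow_eq_one _ _ (cs.simple_mul_simple_pow i j)⟩

theorem reflectionRep_simple (i : B) :
    cs.reflectionRep (cs.simple i) = reflectionPerm (cs.simple i) (cs.inv_simple i) :=
  cs.lift_apply_simple _ i

noncomputable def reflectionCocycle (w t : W) : ZMod 2 := (cs.reflectionRep w (t, 0)).2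

theorem reflectionRep_apply (w t : W) (ε : ZMod 2) :
    cs.reflectionRep w (t, ε) = (w * t * w⁻¹, ε + cs.reflectionCocycle w t) := by
  induction w using cs.simple_induction_left generalizing t ε with
  | one => simp [reflectionCocycle]
  | mul_simple_left w i ih =>
    have hmul : cs.reflectionRep (cs.simple i * w) =
        reflectionPerm (cs.simple i) (cs.inv_simple i) * cs.reflectionRep w := by
      rw [map_mul, reflectionRep_simple]
    rw [reflectionCocycle, hmul, Perm.mul_apply, Perm.mul_apply, ih, ih, reflectionPerm_apply,
      reflectionPerm_apply, zero_add, add_assoc, Prod.mk.injEq]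
    exact ⟨by simp only [mul_inv_rev, mul_assoc], rfl⟩

theorem reflectionCocycle_one (t : W) : cs.reflectionCocycle 1 t = 0 := by
  simp [reflectionCocycle]

theorem reflectionCocycle_simple (i : B) (t : W) :
    cs.reflectionCocycle (cs.simple i) t = if t = cs.simple i then 1 else 0 := by
  rw [reflectionCocycle, reflectionRep_simple, reflectionPerm_apply, zero_add]

theorem reflectionCocycle_mul (u v t : W) :
    cs.reflectionCocycle (u * v) t =
      cs.reflectionCocycle v t + cs.reflectionCocycle u (v * t * v⁻¹) := by
  rw [reflectionCocycle, map_mul, Perm.mul_apply, reflectionRep_apply, reflectionRep_apply,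
    zero_add]

theorem reflectionCocycle_inv (u t : W) :
    cs.reflectionCocycle u⁻¹ t = cs.reflectionCocycle u (u⁻¹ * t * u) := by
  have h := cs.reflectionCocycle_mul u u⁻¹ t
  rwa [mul_inv_cancel, reflectionCocycle_one, inv_inv, eq_comm, CharTwo.add_eq_zero] at h

theorem reflectionCocycle_wordProd_of_not_mem_rightInvSeq {ω : List B} {t : W}
    (ht : t ∉ cs.rightInvSeq ω) : cs.reflectionCocycle (cs.wordProd ω) t = 0 := by
  induction ω with
  | nil => exact cs.reflectionCocycle_one t
  | cons i ω ih =>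
    rw [rightInvSeq, List.mem_cons, not_or, ← mul_mul_inv_eq_iff_eq_inv_mul_mul] at ht
    rw [wordProd_cons, reflectionCocycle_mul, ih ht.2, reflectionCocycle_simple, if_neg ht.1,
      add_zero]

theorem reflectionCocycle_simple_of_isRightDescent {v : W} {j : B} (h : cs.IsRightDescent v j) :
    cs.reflectionCocycle v (cs.simple j) = 1 := by
  obtain ⟨ω, hω, hv⟩ := cs.exists_isReduced (v * cs.simple j)
  have hnot : cs.simple j ∉ cs.rightInvSeq ω := fun hmem => by
    have := (cs.isRightInversion_of_mem_rightInvSeq hω hmem).2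
    rw [← hv, cs.simple_mul_simple_cancel_right] at this
    exact lt_asymm h this
  rw [← cs.simple_mul_simple_cancel_right (w := v) j, hv, reflectionCocycle_mul,
    reflectionCocycle_simple, if_pos rfl, cs.inv_simple, cs.simple_mul_simple_cancel_right,
    cs.reflectionCocycle_wordProd_of_not_mem_rightInvSeq hnot, add_zero]

theorem reflectionCocycle_map (θ : W ≃* W)
    (hθS : ∀ i : B, ∃ j : B, θ (cs.simple i) = cs.simple j) (u t : W) :
    cs.reflectionCocycle (θ u) (θ t) = cs.reflectionCocycle u t := by
  induction u using cs.simple_induction_left generalizing t with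
  | one => rw [map_one, reflectionCocycle_one, reflectionCocycle_one]
  | mul_simple_left w i ih =>
    obtain ⟨j, hj⟩ := hθS i
    rw [map_mul, reflectionCocycle_mul, reflectionCocycle_mul, ← map_inv, ← map_mul, ← map_mul,
      ih, hj, reflectionCocycle_simple, reflectionCocycle_simple, ← hj, θ.injective.eq_iff]

theorem not_isLeftDescent_of_simple_mul_mul_map_eq (θ : W ≃* W)
    (hθS : ∀ i : B, ∃ j : B, θ (cs.simple i) = cs.simple j) (x : W) (i : B)
    (hfix : cs.simple i * (x * θ x⁻¹) * θ (cs.simple i) = x * θ x⁻¹) :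
    ¬ cs.IsLeftDescent (x * θ x⁻¹) i := by
  set s := cs.simple i
  set w := x * θ x⁻¹ with hw
  set r := x⁻¹ * s * x with hr
  have hs : s⁻¹ = s := cs.inv_simple i
  have hθs : θ s = w⁻¹ * s * w := by
    rw [eq_inv_mul_of_mul_eq hfix, mul_inv_rev, hs, mul_assoc]
  have hθr : θ r = r := by
    rw [hr, map_mul, map_mul, map_inv, hθs, hw, map_inv]; group
  intro hdesc
  have hone : cs.reflectionCocycle w⁻¹ s = 1 :=
    cs.reflectionCocycle_simple_of_isRightDescent (cs.isRightDescent_inv_iff.mpr hdesc)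
  have hzero : cs.reflectionCocycle w⁻¹ s = 0 := by
    rw [hw, map_inv, mul_inv_rev, inv_inv, reflectionCocycle_mul, inv_inv, reflectionCocycle_inv,
      ← hr, ← cs.reflectionCocycle_map θ hθS x r, hθr, CharTwo.add_self_eq_zero]
  exact zero_ne_one (hzero.symm.trans hone)

theorem IsReduced.isLeftDescent_wordProd_cons {i : B} {ω : List B} (h : cs.IsReduced (i :: ω)) :
    cs.IsLeftDescent (cs.wordProd (i :: ω)) i := by
  have hlen := cs.length_wordProd_le ω
  rw [IsLeftDescent, h.eq, wordProd_cons, simple_mul_simple_cancel_left, List.length_cons]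
  omega

end CoxeterSystem

theorem stmt_5_general {B W : Type*} [Group W] {M : CoxeterMatrix B}
    (cs : CoxeterSystem M W) (θ : W ≃* W)
    (hθS : ∀ i : B, ∃ j : B, θ (cs.simple i) = cs.simple j)
    (w : W) (hw : w ∈ twistedIdentities θ)
    (ω : List B) (hred : cs.IsReduced ω) (hprod : cs.wordProd ω = w)
    (hcomm : ∀ i ∈ ω, cs.simple i * w * θ (cs.simple i) = w) :
    w = 1 := by
  obtain ⟨x, rfl⟩ := hw
  cases ω with
  | nil => exact hprod.symm.trans cs.wordProd_nil
  | cons i ω =>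
    have hdesc : cs.IsLeftDescent (x * θ x⁻¹) i := hprod ▸ hred.isLeftDescent_wordProd_cons
    exact absurd hdesc <|
      cs.not_isLeftDescent_of_simple_mul_mul_map_eq θ hθS x i (hcomm i List.mem_cons_self)

/-- If a twisted identity `w ∈ ι(θ)` satisfies `s·w·θ(s) = w` for all `s` in the
support `J(w)` of `w` (the letters of any reduced expression for `w`), then
`w = 1`. -/
theorem stmt_5 {B W : Type*} [Group W] {M : CoxeterMatrix B}
    (cs : CoxeterSystem M W) (θ : W ≃* W)
    (hθ2 : ∀ w : W, θ (θ w) = w)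
    (hθS : ∀ i : B, ∃ j : B, θ (cs.simple i) = cs.simple j)
    (w : W) (hw : w ∈ twistedIdentities θ)
    (ω : List B) (hred : cs.IsReduced ω) (hprod : cs.wordProd ω = w)
    (hcomm : ∀ i ∈ ω, cs.simple i * w * θ (cs.simple i) = w) :
    w = 1 :=
  stmt_5_general cs θ hθS w hw ω hred hprod hcomm
end

section
/- The twisted absolute length ℓ^θ is well-defined: for any w ∈ W, the minimal number of letters that must be deleted from a reduced expression for w so that the resulting subword represents an element of ι(θ) is the same for all reduced expressions of w. -/
/-- The minimal number of letters that must be deleted from the word `ω` so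
that the resulting subword represents an element of `ι(θ)`. -/
noncomputable def delNum {B W : Type*} [Group W] {M : CoxeterMatrix B}
    (cs : CoxeterSystem M W) (θ : W ≃* W) (ω : List B) : ℕ :=
  sInf {l : ℕ | ∃ ω' : List B, ω'.Sublist ω ∧ ω'.length + l = ω.length ∧
    cs.wordProd ω' ∈ twistedIdentities θ}

/-!
Every subword of `ω` contributes a pair (length, product), and `delNum` only depends on `ω.length`
and on the set of these pairs. That set is the product, over the letters `i` of `ω`, of
`{1, (1, sᵢ)}` in the monoid `Set (Multiplicative ℕ × W)`; by Matsumoto's theorem it therefore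
depends only on the element represented by a reduced `ω`, as soon as it is invariant under braid
moves. For a braid move this is a computation in the dihedral group generated by `sᵢ` and `sⱼ`:
the subwords of length `k < m` of either alternating word of length `m` realise exactly the
products of the alternating words whose length is at most `k` and has the parity of `k`.

Matsumoto's theorem follows by induction on the length from the exchange property, which comes
from the reflection cocycle: the parities of the multiplicities in the inversion sequence of `ω`
form the first component of a homomorphism `W →* (W → ℤˣ) ⋊ W` applied to `π ω`, so they only
depend on `π ω`.
-/

open CoxeterSystem List

open scoped Pointwise

section ReflectionParity

variable {W : Type*}

def countSign [DecidableEq W] (L : List W) (t : W) : ℤˣ := (-1) ^ L.count t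

lemma countSign_append [DecidableEq W] (L L' : List W) :
    countSign (L ++ L') = countSign L * countSign L' := by
  funext t
  simp [countSign, pow_add]

lemma countSign_reverse [DecidableEq W] (L : List W) : countSign L.reverse = countSign L := by
  funext t
  simp [countSign]

lemma mem_of_countSign_ne_one [DecidableEq W] {L : List W} {t : W} (h : countSign L t ≠ 1) :
    t ∈ L := by
  by_contra ht
  simp [countSign, count_eq_zero_of_not_mem ht] at h

variable [Group W]

lemma countSign_map_conj [DecidableEq W] (L : List W) (x t : W) :
    countSign (L.map (MulAut.conj x)) t = countSign L (x⁻¹ * t * x) := by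
  have ht : t = MulAut.conj x (x⁻¹ * t * x) := by simp [mul_assoc]
  conv_lhs => rw [ht]
  rw [countSign, count_map_of_injective _ _ (MulAut.conj x).injective, countSign]

attribute [local instance] arrowMulDistribMulAction in
def arrowConj : W →* MulAut (W → ℤˣ) :=
  (MulDistribMulAction.toMulAut (ConjAct W) (W → ℤˣ)).comp ConjAct.toConjAct.toMonoidHom

lemma arrowConj_apply (w : W) (F : W → ℤˣ) (t : W) : arrowConj w F t = F (w⁻¹ * t * w) := by
  change F ((ConjAct.toConjAct w)⁻¹ • t) = _
  simp [ConjAct.smul_def]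

end ReflectionParity

namespace CoxeterSystem

variable {B W : Type*} [Group W] {M : CoxeterMatrix B} (cs : CoxeterSystem M W)

local prefix:100 "s" => cs.simple
local prefix:100 "π" => cs.wordProd
local prefix:100 "ℓ" => cs.length
local prefix:100 "ris" => cs.rightInvSeq
local prefix:100 "lis" => cs.leftInvSeq

theorem prod_map_alternatingWord_two_mul {N : Type*} [Monoid N] (f : B → N) (i j : B) (p : ℕ) :
    ((alternatingWord i j (2 * p)).map f).prod = (f i * f j) ^ p := by
  induction p with
  | zero => simp [alternatingWord]
  | succ p ih =>
    rw [show 2 * (p + 1) = 2 * p + 1 + 1 by ring, alternatingWord_succ', alternatingWord_succ']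
    simp [ih, pow_succ', mul_assoc]

theorem wordProd_alternatingWord_two_mul (i j : B) (p : ℕ) :
    π (alternatingWord i j (2 * p)) = (s i * s j) ^ p :=
  prod_map_alternatingWord_two_mul cs.simple i j p

theorem simple_mul_simple_pow_eq_one_comm {i j : B} {e : ℕ} :
    (s i * s j) ^ e = 1 ↔ (s j * s i) ^ e = 1 := by
  rw [show s j * s i = (s i * s j)⁻¹ by simp, inv_pow, inv_eq_one]

theorem wordProd_alternatingWord_eq_iff (i j : B) (d : ℕ) :
    π (alternatingWord i j d) = π (alternatingWord j i d) ↔ (s i * s j) ^ d = 1 := by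
  have hji : s j * s i = (s i * s j)⁻¹ := by simp
  rw [prod_alternatingWord_eq_mul_pow, prod_alternatingWord_eq_mul_pow, hji, inv_pow]
  obtain ⟨n, rfl | rfl⟩ := Nat.even_or_odd' d
  · simp only [even_two_mul, ↓reduceIte, one_mul, Nat.mul_div_cancel_left _ two_pos]
    rw [eq_inv_iff_mul_eq_one, ← pow_add, two_mul]
  · rw [if_neg (Nat.not_even_two_mul_add_one n), if_neg (Nat.not_even_two_mul_add_one n),
      show (2 * n + 1) / 2 = n by omega, ← mul_right_inj (s i), simple_mul_simple_cancel_left,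
      ← mul_assoc, ← pow_succ', eq_inv_iff_mul_eq_one, ← pow_add]
    ring_nf

section Cocycle

variable [DecidableEq W]

def reflGen (i : B) : (W → ℤˣ) ⋊[arrowConj] W := ⟨countSign [s i], s i⟩

theorem prod_map_reflGen (ω : List B) :
    (ω.map cs.reflGen).prod = ⟨countSign (lis ω), π ω⟩ := by
  induction ω with
  | nil => rfl
  | cons i ω ih =>
    rw [map_cons, prod_cons, ih, reflGen, SemidirectProduct.mul_def, wordProd_cons]
    congr 1
    rw [show lis (i :: ω) = [s i] ++ (lis ω).map (MulAut.conj (s i)) from rfl, countSign_append]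
    congr 1
    funext t
    rw [arrowConj_apply, countSign_map_conj, inv_simple]

theorem countSign_leftInvSeq_alternatingWord {i j : B} {p : ℕ} (h : (s i * s j) ^ p = 1) :
    countSign (lis (alternatingWord i j (2 * p))) = 1 := by
  set L := lis (alternatingWord i j (2 * p))
  -- `L[k] = π (alternatingWord j i (2 * k + 1))`, which is periodic in `k` with period `p`.
  have hL : L = L.take p ++ L.take p := by
    apply ext_getElem (by simp [L]; omega)
    intro k h₁ h₂
    have hp : (s j * s i) ^ p = 1 := cs.simple_mul_simple_pow_eq_one_comm.mp h
    simp only [L, length_leftInvSeq, length_alternatingWord] at h₁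
    rw [getElem_append]
    split_ifs with hk
    · simp
    · obtain ⟨q, rfl⟩ : ∃ q, k = p + q := ⟨k - p, by simp [L] at hk; omega⟩
      simp only [getElem_take, length_take, L, length_leftInvSeq, length_alternatingWord,
        show min p (2 * p) = p by omega, Nat.add_sub_cancel_left]
      rw [cs.getElem_leftInvSeq_alternatingWord i j p _ h₁,
        cs.getElem_leftInvSeq_alternatingWord i j p _ (by omega), prod_alternatingWord_eq_mul_pow,
        prod_alternatingWord_eq_mul_pow, show (2 * (p + q) + 1) / 2 = p + q by omega,
        show (2 * q + 1) / 2 = q by omega, pow_add, hp, one_mul]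
      simp only [Nat.not_even_two_mul_add_one, ↓reduceIte]
  rw [hL, countSign_append]
  funext t
  simp [countSign, ← pow_add, ← two_mul, pow_mul]

theorem reflGen_isLiftable : M.IsLiftable cs.reflGen := fun i j => by
  have h := cs.prod_map_reflGen (alternatingWord i j (2 * M i j))
  rw [prod_map_alternatingWord_two_mul, countSign_leftInvSeq_alternatingWord cs
    (cs.simple_mul_simple_pow i j), wordProd_alternatingWord_two_mul,
    cs.simple_mul_simple_pow] at h
  exact h

def reflCocycle : W →* (W → ℤˣ) ⋊[arrowConj] W := cs.lift ⟨cs.reflGen, cs.reflGen_isLiftable⟩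

theorem reflCocycle_wordProd (ω : List B) :
    cs.reflCocycle (π ω) = ⟨countSign (lis ω), π ω⟩ := by
  rw [← prod_map_reflGen, wordProd, map_list_prod, map_map]
  congr 2
  funext i
  exact cs.lift_apply_simple cs.reflGen_isLiftable i

theorem countSign_leftInvSeq_eq {ω ω' : List B} (h : π ω = π ω') :
    countSign (lis ω) = countSign (lis ω') := by
  simpa [reflCocycle_wordProd] using congrArg (fun w => (cs.reflCocycle w).left) h

theorem countSign_rightInvSeq_eq {ω ω' : List B} (h : π ω = π ω') :
    countSign (ris ω) = countSign (ris ω') := by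
  have := cs.countSign_leftInvSeq_eq (ω := ω.reverse) (ω' := ω'.reverse) (by simp [h])
  rwa [leftInvSeq_reverse, leftInvSeq_reverse, countSign_reverse, countSign_reverse] at this

end Cocycle

theorem simple_mem_rightInvSeq {ω : List B} {i : B}
    (hi : cs.IsRightDescent (π ω) i) : s i ∈ ris ω := by
  classical
  obtain ⟨α, hα, hαω⟩ := cs.exists_isReduced (π ω * s i)
  have hα_not : s i ∉ ris α := fun hmem => by
    have := (cs.isRightInversion_of_mem_rightInvSeq hα hmem).2
    rw [← hαω, simple_mul_simple_cancel_right] at this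
    exact absurd hi (by unfold IsRightDescent; omega)
  have hword : π (α.concat i) = π ω := by
    rw [wordProd_concat, ← hαω, simple_mul_simple_cancel_right]
  apply mem_of_countSign_ne_one
  rw [← cs.countSign_rightInvSeq_eq hword, rightInvSeq_concat, concat_eq_append, countSign_append,
    Pi.mul_apply, countSign_map_conj, inv_simple, simple_mul_simple_self, one_mul]
  simp [countSign, count_eq_zero_of_not_mem hα_not]

theorem exists_sublist_of_isRightDescent {ω : List B} {i : B}
    (hi : cs.IsRightDescent (π ω) i) :
    ∃ ω', ω' <+ ω ∧ ω'.length + 1 = ω.length ∧ π ω * s i = π ω' := by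
  obtain ⟨k, hk, hki⟩ := mem_iff_getElem.mp (cs.simple_mem_rightInvSeq hi)
  rw [length_rightInvSeq] at hk
  refine ⟨ω.eraseIdx k, eraseIdx_sublist _ _, length_eraseIdx_add_one hk, ?_⟩
  rw [← wordProd_mul_getD_rightInvSeq, getD_eq_getElem _ _ (by simpa using hk), hki]

variable {cs}

theorem IsReduced.of_append_left {α β : List B} (h : cs.IsReduced (α ++ β)) : cs.IsReduced α := by
  simpa using h.take α.length

theorem IsReduced.of_append_right {α β : List B} (h : cs.IsReduced (α ++ β)) :
    cs.IsReduced β := by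
  simpa using h.drop α.length

theorem IsReduced.of_wordProd_eq {ω ω' : List B} (h : cs.IsReduced ω) (hπ : π ω' = π ω)
    (hlen : ω'.length = ω.length) : cs.IsReduced ω' := by
  rw [IsReduced, hπ, hlen, h.eq]

theorem IsReduced.isRightDescent {α : List B} {i : B} (h : cs.IsReduced (α ++ [i])) :
    cs.IsRightDescent (π (α ++ [i])) i := by
  have := cs.length_wordProd_le α
  rw [IsRightDescent, h.eq, wordProd_append, wordProd_singleton, simple_mul_simple_cancel_right]
  simp only [length_append, length_singleton]
  omega

variable (cs)

theorem not_isReduced_append_pair (ρ : List B) (i : B) : ¬ cs.IsReduced (ρ ++ [i, i]) := by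
  intro h
  have := cs.length_wordProd_le ρ
  rw [IsReduced, wordProd_append, wordProd_cons, wordProd_singleton, simple_mul_simple_self,
    mul_one] at h
  simp only [length_append, length_cons, length_nil] at h
  omega

theorem eq_alternatingWord_of_isReduced {i j : B} {τ : List B} (hτ : ∀ x ∈ τ, x = i ∨ x = j)
    (h : cs.IsReduced (τ ++ [j])) : τ ++ [j] = alternatingWord i j (τ.length + 1) := by
  induction τ using reverseRecOn generalizing i j with
  | nil => rfl
  | append_singleton τ x ih =>
    obtain rfl : x = i := (hτ x (by simp)).resolve_right fun hxj =>
      cs.not_isReduced_append_pair τ j (by simpa [hxj] using h)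
    have hτx := ih (fun y hy => (hτ y (by simp [hy])).symm) h.of_append_left
    rw [alternatingWord_succ, concat_eq_append, length_append, length_singleton, ← hτx]

theorem mem_alternatingWord {i j x : B} {m : ℕ} (hx : x ∈ alternatingWord i j m) :
    x = i ∨ x = j := by
  induction m with
  | zero => simp [alternatingWord] at hx
  | succ m ih =>
    rw [alternatingWord_succ', mem_cons] at hx
    rcases hx with rfl | hx
    · split <;> simp
    · exact ih hx

theorem exists_isReduced_append_alternatingWord {w : W} {i j : B} (hi : cs.IsRightDescent w i)
    (hj : cs.IsRightDescent w j) {d : ℕ} (hd : ∀ e, 0 < e → e < d → (s i * s j) ^ e ≠ 1) :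
    ∃ δ, cs.IsReduced (δ ++ alternatingWord i j d) ∧ π (δ ++ alternatingWord i j d) = w := by
  induction d generalizing i j with
  | zero =>
    obtain ⟨δ, hδ, rfl⟩ := cs.exists_isReduced w
    exact ⟨δ, by simpa [alternatingWord] using hδ, by simp [alternatingWord]⟩
  | succ d ih =>
    obtain ⟨δ, hred, hw⟩ := ih hj hi fun e he hed => by
      rw [ne_eq, ← simple_mul_simple_pow_eq_one_comm]
      exact hd e he (by omega)
    simp only [alternatingWord_succ, concat_eq_append, ← append_assoc]
    obtain ⟨ω', hsub, hlen, hπ⟩ := cs.exists_sublist_of_isRightDescent (hw ▸ hj)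
    obtain ⟨δ', A', rfl, hδ', hA'⟩ := sublist_append_iff.mp hsub
    have hδ'_le := hδ'.length_le
    have hA'_le := hA'.length_le
    simp only [length_append, length_alternatingWord] at hlen hA'_le
    by_cases hA : A'.length = d
    · obtain rfl := hA'.eq_of_length (by simpa using hA)
      have hw' : π (δ' ++ alternatingWord j i d ++ [j]) = w := by
        rw [wordProd_append, ← hπ, wordProd_singleton, simple_mul_simple_cancel_right, hw]
      exact ⟨δ', hred.of_wordProd_eq (hw'.trans hw.symm) (by simp; omega), hw'⟩
    · -- The exchanged letter lies in the alternating suffix: then `A' ++ [j]` is a second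
      -- reduced alternating word for `π (alternatingWord j i d)`, a braid relation of length `d`.
      exfalso
      obtain rfl := hδ'.eq_of_length (by omega)
      have hA'π : π (alternatingWord j i d) * s j = π A' := by
        simpa [wordProd_append, mul_assoc] using hπ
      have hσ : cs.IsReduced (A' ++ [j]) := by
        refine IsReduced.of_append_right (hred.of_wordProd_eq ?_ (by simp; omega))
        simp only [wordProd_append, wordProd_singleton, ← hA'π, mul_assoc, simple_mul_simple_self,
          mul_one]
      have halt := cs.eq_alternatingWord_of_isReduced (i := i)
        (fun x hx => (mem_alternatingWord (hA'.subset hx)).symm) hσ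
      rw [show A'.length + 1 = d by omega] at halt
      apply hd d (by omega) (by omega)
      rw [← wordProd_alternatingWord_eq_iff, ← halt, wordProd_append, ← hA'π, wordProd_singleton,
        simple_mul_simple_cancel_right]

theorem exists_isReduced_append_alternatingWord_orderOf {w : W} {i j : B}
    (hi : cs.IsRightDescent w i) (hj : cs.IsRightDescent w j) :
    orderOf (s i * s j) ≠ 0 ∧ ∃ δ, cs.IsReduced (δ ++ alternatingWord i j (orderOf (s i * s j))) ∧
      π (δ ++ alternatingWord i j (orderOf (s i * s j))) = w := by
  have hfin : orderOf (s i * s j) ≠ 0 := fun h0 => by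
    obtain ⟨δ, hred, hw⟩ := cs.exists_isReduced_append_alternatingWord hi hj (d := ℓ w + 1)
      fun e he _ => orderOf_eq_zero_iff'.mp h0 e he
    have := hred.eq
    rw [hw, length_append, length_alternatingWord] at this
    omega
  exact ⟨hfin, cs.exists_isReduced_append_alternatingWord hi hj
    fun e he hlt => pow_ne_one_of_lt_orderOf he.ne' hlt⟩

/-- Matsumoto's theorem. Braid moves are taken of length `orderOf (sᵢ * sⱼ)`, which is `M i j`;
the proof only uses that it is the least `m > 0` with `(sᵢ * sⱼ) ^ m = 1`. -/
theorem prod_map_eq_of_isReduced {N : Type*} [Monoid N] (f : B → N)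
    (hf : ∀ i j, ((alternatingWord i j (orderOf (s i * s j))).map f).prod =
      ((alternatingWord j i (orderOf (s i * s j))).map f).prod)
    {ω₁ ω₂ : List B} (h₁ : cs.IsReduced ω₁) (h₂ : cs.IsReduced ω₂) (h : π ω₁ = π ω₂) :
    (ω₁.map f).prod = (ω₂.map f).prod := by
  induction hn : ω₁.length using Nat.strong_induction_on generalizing ω₁ ω₂ with
  | _ n ih =>
  have hlen : ω₁.length = ω₂.length := by rw [← h₁.eq, ← h₂.eq, h]
  have peel : ∀ α β x, cs.IsReduced (α ++ [x]) → cs.IsReduced (β ++ [x]) →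
      π (α ++ [x]) = π (β ++ [x]) → α.length + 1 = n →
      ((α ++ [x]).map f).prod = ((β ++ [x]).map f).prod := by
    intro α β x hα hβ hαβ hαn
    have hπ : π α = π β := by simpa [wordProd_append] using hαβ
    simp only [map_append, prod_append, ih α.length (by omega) hα.of_append_left
      hβ.of_append_left hπ rfl]
  rcases eq_nil_or_concat' ω₁ with rfl | ⟨α, i, rfl⟩
  · rw [List.length_eq_zero_iff.mp hlen.symm]
  rcases eq_nil_or_concat' ω₂ with rfl | ⟨β, j, rfl⟩
  · simp at hlen
  obtain ⟨hm, δ, hX, hXw⟩ := cs.exists_isReduced_append_alternatingWord_orderOf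
    h₁.isRightDescent (h ▸ h₂.isRightDescent)
  have hbraid := hf i j
  have hπbraid := (cs.wordProd_alternatingWord_eq_iff i j _).mpr (pow_orderOf_eq_one (s i * s j))
  set m₀ := orderOf (s i * s j)
  obtain ⟨m, hm'⟩ := Nat.exists_eq_add_one_of_ne_zero hm
  have hY : π (δ ++ alternatingWord j i m₀) = π (α ++ [i]) := by
    rw [wordProd_append, ← hπbraid, ← wordProd_append, hXw]
  have hYred : cs.IsReduced (δ ++ alternatingWord j i m₀) :=
    hX.of_wordProd_eq (hY.trans hXw.symm) (by simp)
  have hXn : δ.length + m + 1 = n := by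
    have := hX.eq
    rw [hXw, h₁.eq, hn, length_append, length_alternatingWord, hm'] at this
    omega
  have hXeq : δ ++ alternatingWord i j m₀ = δ ++ alternatingWord j i m ++ [j] := by
    rw [hm', alternatingWord_succ, concat_eq_append, append_assoc]
  have hYeq : δ ++ alternatingWord j i m₀ = δ ++ alternatingWord i j m ++ [i] := by
    rw [hm', alternatingWord_succ, concat_eq_append, append_assoc]
  calc ((α ++ [i]).map f).prod
      = ((δ ++ alternatingWord j i m₀).map f).prod := by
        rw [hYeq] at hYred hY ⊢
        exact peel _ _ _ h₁ hYred hY.symm (by simpa using hn)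
    _ = ((δ ++ alternatingWord i j m₀).map f).prod := by
        simp only [map_append, prod_append, hbraid]
    _ = ((β ++ [j]).map f).prod := by
        rw [hXeq] at hX hXw ⊢
        exact peel _ _ _ hX h₂ (hXw.trans h) (by simpa using hXn)

def alternatingProds (i j : B) (k : ℕ) : Set W :=
  {u | ∃ d ≤ k, d % 2 = k % 2 ∧ (π (alternatingWord i j d) = u ∨ π (alternatingWord j i d) = u)}

theorem alternatingProds_comm (i j : B) : cs.alternatingProds i j = cs.alternatingProds j i := by
  funext k
  ext u
  simp only [alternatingProds, Set.mem_ofPred_eq, or_comm]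

theorem simple_mul_wordProd_alternatingWord_mem {a b x : B} (hx : x = a ∨ x = b) (d : ℕ) :
    s x * π (alternatingWord a b d) ∈ cs.alternatingProds a b (d + 1) := by
  by_cases hy : x = if Even d then b else a
  · exact ⟨d + 1, le_rfl, rfl, Or.inl (by rw [alternatingWord_succ', wordProd_cons, ← hy])⟩
  cases d with
  | zero =>
    obtain rfl : x = a := by simp at hy; tauto
    exact ⟨1, le_rfl, rfl, Or.inr (by simp [alternatingWord])⟩
  | succ e =>
    have hx' : x = if Even e then b else a := by
      rcases hx with rfl | rfl <;> by_cases he : Even e <;> simp_all [Nat.even_add_one]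
    exact ⟨e, by omega, by omega, Or.inl (by
      rw [alternatingWord_succ', wordProd_cons, ← hx', simple_mul_simple_cancel_left])⟩

theorem simple_mul_mem_alternatingProds {i j x : B} (hx : x = i ∨ x = j) {k : ℕ} {u : W}
    (hu : u ∈ cs.alternatingProds i j k) : s x * u ∈ cs.alternatingProds i j (k + 1) := by
  obtain ⟨d, hdk, hpar, rfl | rfl⟩ := hu
  · obtain ⟨d', hd', hpar', h⟩ := cs.simple_mul_wordProd_alternatingWord_mem hx d
    exact ⟨d', by omega, by omega, h⟩
  · obtain ⟨d', hd', hpar', h⟩ := cs.simple_mul_wordProd_alternatingWord_mem hx.symm d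
    exact ⟨d', by omega, by omega, h.symm⟩

theorem wordProd_mem_alternatingProds {i j : B} {σ : List B} (hσ : ∀ x ∈ σ, x = i ∨ x = j) :
    π σ ∈ cs.alternatingProds i j σ.length := by
  induction σ with
  | nil => exact ⟨0, le_rfl, rfl, Or.inl rfl⟩
  | cons x σ ih =>
    rw [wordProd_cons, length_cons]
    exact cs.simple_mul_mem_alternatingProds (hσ x mem_cons_self)
      (ih fun y hy => hσ y (mem_cons_of_mem _ hy))

theorem exists_sublist_alternatingWord {i j : B} {m k : ℕ} (hk : k < m) {u : W}
    (hu : u ∈ cs.alternatingProds i j k) :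
    ∃ σ, σ <+ alternatingWord i j m ∧ σ.length = k ∧ π σ = u := by
  induction m generalizing k u with
  | zero => omega
  | succ m ih =>
    rcases Nat.lt_succ_iff_lt_or_eq.mp hk with hk | rfl
    · obtain ⟨σ, hσ, hlen, hπ⟩ := ih hk hu
      exact ⟨σ, hσ.trans (by rw [alternatingWord_succ']; exact sublist_cons_self _ _), hlen, hπ⟩
    obtain ⟨d, hdk, hpar, hu⟩ := hu
    rcases hdk.lt_or_eq with hd | rfl
    · obtain ⟨n, rfl⟩ : ∃ n, k = n + 2 := ⟨k - 2, by omega⟩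
      set y := if Even (n + 2) then j else i
      have hy : y = i ∨ y = j := by unfold y; split <;> simp
      obtain ⟨σ, hσ, hlen, hπ⟩ := ih (by omega)
        (cs.simple_mul_mem_alternatingProds hy (k := n) ⟨d, by omega, by omega, hu⟩)
      refine ⟨y :: σ, ?_, by simp [hlen], by rw [wordProd_cons, hπ, simple_mul_simple_cancel_left]⟩
      rw [alternatingWord_succ']
      exact hσ.cons_cons _
    rcases hu with rfl | rfl
    · exact ⟨_, by rw [alternatingWord_succ']; exact sublist_cons_self _ _, by simp, rfl⟩
    · exact ⟨_, by rw [alternatingWord_succ, concat_eq_append]; exact sublist_append_left _ _,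
        by simp, rfl⟩

/-- Lengths are recorded in `Multiplicative ℕ`, so that concatenating subwords is the pointwise
product of these sets. -/
def subwordProds (ω : List B) : Set (Multiplicative ℕ × W) :=
  {p | ∃ σ, σ <+ ω ∧ (Multiplicative.ofAdd σ.length, π σ) = p}

theorem subwordProds_cons (i : B) (ω : List B) :
    cs.subwordProds (i :: ω) = cs.subwordProds [i] * cs.subwordProds ω := by
  ext p
  simp only [subwordProds, Set.mem_mul, Set.mem_ofPred_eq, sublist_singleton,
    sublist_cons_iff (a := i) (l' := ω)]
  constructor
  · rintro ⟨σ, hσ | ⟨σ, rfl, hσ⟩, rfl⟩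
    · exact ⟨_, ⟨[], Or.inl rfl, rfl⟩, _, ⟨σ, hσ, rfl⟩, by simp⟩
    · exact ⟨_, ⟨[i], Or.inr rfl, rfl⟩, _, ⟨σ, hσ, rfl⟩,
        by simp [wordProd_cons, ← ofAdd_add, add_comm]⟩
  · rintro ⟨_, ⟨τ, rfl | rfl, rfl⟩, _, ⟨σ, hσ, rfl⟩, rfl⟩
    · exact ⟨σ, Or.inl hσ, by simp⟩
    · exact ⟨i :: σ, Or.inr ⟨σ, rfl, hσ⟩, by simp [wordProd_cons, ← ofAdd_add, add_comm]⟩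

theorem subwordProds_eq_prod (ω : List B) :
    cs.subwordProds ω = (ω.map fun i => cs.subwordProds [i]).prod := by
  induction ω with
  | nil => ext p; simp [subwordProds, eq_comm]; rfl
  | cons i ω ih => rw [subwordProds_cons, map_cons, prod_cons, ih]

theorem subwordProds_alternatingWord_subset {i j : B} {m : ℕ} (h : (s i * s j) ^ m = 1) :
    cs.subwordProds (alternatingWord i j m) ⊆ cs.subwordProds (alternatingWord j i m) := by
  rintro _ ⟨σ, hσ, rfl⟩
  have hle := hσ.length_le
  rw [length_alternatingWord] at hle
  rcases hle.lt_or_eq with hlt | heq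
  · have hu := cs.wordProd_mem_alternatingProds fun x hx => mem_alternatingWord (hσ.subset hx)
    rw [alternatingProds_comm] at hu
    obtain ⟨τ, hτ, hlen, hπ⟩ := cs.exists_sublist_alternatingWord hlt hu
    exact ⟨τ, hτ, by rw [hlen, hπ]⟩
  · obtain rfl := hσ.eq_of_length (by simpa using heq)
    exact ⟨_, Sublist.refl _, by simp [(wordProd_alternatingWord_eq_iff cs i j m).mpr h]⟩

theorem subwordProds_alternatingWord_comm {i j : B} {m : ℕ} (h : (s i * s j) ^ m = 1) :
    cs.subwordProds (alternatingWord i j m) = cs.subwordProds (alternatingWord j i m) :=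
  (cs.subwordProds_alternatingWord_subset h).antisymm
    (cs.subwordProds_alternatingWord_subset (cs.simple_mul_simple_pow_eq_one_comm.mp h))

theorem subwordProds_eq_of_isReduced {ω₁ ω₂ : List B} (h₁ : cs.IsReduced ω₁)
    (h₂ : cs.IsReduced ω₂) (h : π ω₁ = π ω₂) : cs.subwordProds ω₁ = cs.subwordProds ω₂ := by
  rw [subwordProds_eq_prod, subwordProds_eq_prod]
  refine cs.prod_map_eq_of_isReduced _ (fun i j => ?_) h₁ h₂ h
  rw [← subwordProds_eq_prod, ← subwordProds_eq_prod]
  exact cs.subwordProds_alternatingWord_comm (pow_orderOf_eq_one _)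

end CoxeterSystem

theorem delNum_eq_sInf_subwordProds {B W : Type*} [Group W] {M : CoxeterMatrix B}
    (cs : CoxeterSystem M W) (θ : W ≃* W) (ω : List B) :
    delNum cs θ ω = sInf {l | ∃ p ∈ cs.subwordProds ω,
      Multiplicative.toAdd p.1 + l = ω.length ∧ p.2 ∈ twistedIdentities θ} := by
  unfold delNum
  congr 1
  ext l
  constructor
  · rintro ⟨σ, hσ, hl, hι⟩
    exact ⟨_, ⟨σ, hσ, rfl⟩, hl, hι⟩
  · rintro ⟨_, ⟨σ, hσ, rfl⟩, hl, hι⟩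
    exact ⟨σ, hσ, hl, hι⟩

theorem stmt_15_general {B W : Type*} [Group W] {M : CoxeterMatrix B}
    (cs : CoxeterSystem M W) (θ : W ≃* W)
    (ω₁ ω₂ : List B) (h₁ : cs.IsReduced ω₁) (h₂ : cs.IsReduced ω₂)
    (heq : cs.wordProd ω₁ = cs.wordProd ω₂) :
    delNum cs θ ω₁ = delNum cs θ ω₂ := by
  have hlen : ω₁.length = ω₂.length := by rw [← h₁.eq, ← h₂.eq, heq]
  rw [delNum_eq_sInf_subwordProds, delNum_eq_sInf_subwordProds,
    cs.subwordProds_eq_of_isReduced h₁ h₂ heq, hlen]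

/-- The twisted absolute length is well-defined: the minimal number of letters
one must delete from a reduced expression of `w` to obtain a subword lying in
`ι(θ)` is the same for all reduced expressions of `w`. -/
theorem stmt_15 {B W : Type*} [Group W] {M : CoxeterMatrix B}
    (cs : CoxeterSystem M W) (θ : W ≃* W)
    (hθ2 : ∀ w : W, θ (θ w) = w)
    (hθS : ∀ i : B, ∃ j : B, θ (cs.simple i) = cs.simple j)
    (ω₁ ω₂ : List B) (h₁ : cs.IsReduced ω₁) (h₂ : cs.IsReduced ω₂)
    (heq : cs.wordProd ω₁ = cs.wordProd ω₂) :
    delNum cs θ ω₁ = delNum cs θ ω₂ :=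
  stmt_15_general cs θ ω₁ ω₂ h₁ h₂ heq
end
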